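/- The formal power series Q_y(α) and R_y(α) = (e^{α(1+y)} - 1)/(e^{α(1+y)} + y) satisfy R_y(α) = α / Q_y(α) as formal power series over the field Q(y). -/

import Mathlib

open PowerSeries

noncomputable section

/-- The field `K = ℚ(y)`. -/
abbrev Ky : Type := RatFunc ℚ

/-- `y ∈ ℚ(y)`. -/
def yK : Ky := RatFunc.X

/-- The series `(1 - e^{-α(1+y)})/α ∈ ℚ(y)⟦α⟧`: its `n`-th coefficient is
`(-1)^n (1+y)^{n+1}/(n+1)!`; its constant term is `1+y`, a unit. -/
def hK : PowerSeries Ky :=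
  PowerSeries.mk fun n =>
    (-1 : Ky) ^ n * (1 + yK) ^ (n + 1) * algebraMap ℚ Ky (((n + 1).factorial : ℚ))⁻¹

/-- `Q_y(α) = α(1+y)/(1-e^{-α(1+y)}) - αy = (1+y)·((1-e^{-α(1+y)})/α)⁻¹ - αy`. -/
def QserK : PowerSeries Ky :=
  PowerSeries.C (1 + yK) * hK⁻¹ - PowerSeries.X * PowerSeries.C yK

/-- The series `(e^{α(1+y)} - 1)/α`, with `n`-th coefficient `(1+y)^{n+1}/(n+1)!`. -/
def kK : PowerSeries Ky :=
  PowerSeries.mk fun n => (1 + yK) ^ (n + 1) * algebraMap ℚ Ky (((n + 1).factorial : ℚ))⁻¹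

/-- The exponential series `e^{α(1+y)}`. -/
def expK : PowerSeries Ky :=
  PowerSeries.mk fun n => (1 + yK) ^ n * algebraMap ℚ Ky ((n.factorial : ℚ))⁻¹

/-- `R_y(α) = (e^{α(1+y)} - 1)/(e^{α(1+y)} + y)`; the denominator has constant
term `1+y`, which is invertible in `ℚ(y)`. -/
def RserK : PowerSeries Ky :=
  PowerSeries.X * kK * (expK + PowerSeries.C yK)⁻¹

lemma one_add_yK_ne : (1 + yK : Ky) ≠ 0 := by
  have : (1 + yK : Ky) = algebraMap (Polynomial ℚ) Ky (1 + Polynomial.X) := by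
    simp [yK, RatFunc.algebraMap_X]
  rw [this]
  apply RatFunc.algebraMap_ne_zero
  intro h
  have := congrArg (Polynomial.eval 0) h
  simp at this

lemma expK_eq : expK = rescale (1 + yK) (exp Ky) := by
  ext n
  simp [expK, coeff_rescale, coeff_exp, one_div]

lemma X_mul_kK : PowerSeries.X * kK = expK - 1 := by
  ext n
  cases n with
  | zero => simp [kK, expK, coeff_zero_eq_constantCoeff]
  | succ m =>
      rw [PowerSeries.coeff_succ_X_mul]
      simp [kK, expK, PowerSeries.coeff_one]

lemma X_mul_hK : PowerSeries.X * hK = 1 - rescale (-(1 + yK)) (exp Ky) := by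
  ext n
  cases n with
  | zero =>
      rw [coeff_zero_eq_constantCoeff, map_mul, PowerSeries.constantCoeff_X, zero_mul]
      simp [← coeff_zero_eq_constantCoeff, coeff_rescale, coeff_exp]
  | succ m =>
      rw [PowerSeries.coeff_succ_X_mul]
      simp only [hK, coeff_mk, map_sub, PowerSeries.coeff_one, coeff_rescale, coeff_exp, one_div,
        Nat.succ_ne_zero, if_false]
      rw [neg_pow (1 + yK) (m + 1), pow_succ (-1 : Ky) m]
      ring

lemma expK_mul_neg : expK * rescale (-(1 + yK)) (exp Ky) = 1 := by
  have h1 : rescale (-(1 + yK)) (exp Ky) = rescale (1 + yK) (evalNegHom (exp Ky)) := by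
    rw [evalNegHom, rescale_rescale]
    congr 1
    ring
  rw [expK_eq, h1, ← map_mul, exp_mul_exp_neg_eq_one, map_one]

lemma hK_mul_expK : hK * expK = kK := by
  have hX : (PowerSeries.X : PowerSeries Ky) ≠ 0 := PowerSeries.X_ne_zero
  have : PowerSeries.X * (hK * expK) = PowerSeries.X * kK := by
    rw [← mul_assoc, X_mul_hK, X_mul_kK, sub_mul, one_mul,
      mul_comm (rescale (-(1 + yK)) (exp Ky)) expK, expK_mul_neg]
  exact mul_left_cancel₀ hX this

lemma constCoeff_hK : constantCoeff hK = 1 + yK := by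
  simp [hK, ← coeff_zero_eq_constantCoeff]

lemma constCoeff_denom : constantCoeff (expK + PowerSeries.C yK) = 1 + yK := by
  simp [expK, ← coeff_zero_eq_constantCoeff]

lemma hK_inv_mul : hK⁻¹ * hK = 1 :=
  PowerSeries.inv_mul_cancel _ (by rw [constCoeff_hK]; exact one_add_yK_ne)

lemma denom_mul_inv : (expK + PowerSeries.C yK) * (expK + PowerSeries.C yK)⁻¹ = 1 :=
  PowerSeries.mul_inv_cancel _ (by rw [constCoeff_denom]; exact one_add_yK_ne)

lemma key : QserK * (PowerSeries.X * kK) = PowerSeries.X * (expK + PowerSeries.C yK) := by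
  have h1 : hK⁻¹ * kK = expK := by
    rw [← hK_mul_expK, ← mul_assoc, hK_inv_mul, one_mul]
  have h2 : PowerSeries.C yK * (PowerSeries.X * kK) =
      PowerSeries.C yK * (expK - 1) := by rw [X_mul_kK]
  calc QserK * (PowerSeries.X * kK)
      = PowerSeries.X * (PowerSeries.C (1 + yK) * (hK⁻¹ * kK))
        - PowerSeries.X * (PowerSeries.X * (PowerSeries.C yK * kK)) := by
        rw [QserK]; ring
    _ = PowerSeries.X * (PowerSeries.C (1 + yK) * expK)
        - PowerSeries.X * (PowerSeries.C yK * (expK - 1)) := by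
        rw [h1, ← h2]; ring
    _ = PowerSeries.X * (expK + PowerSeries.C yK) := by
        rw [map_add, map_one]; ring

/-- `Q_y(α) · R_y(α) = α`; more precisely `R_y(α) = α / Q_y(α)` in `ℚ(y)⟦α⟧`
(note `Q_y(α)` has constant term `1`, hence is invertible). -/
theorem Q_mul_R_eq_X_and_R_eq_X_div_Q :
    QserK * RserK = PowerSeries.X ∧ RserK = PowerSeries.X * QserK⁻¹ := by
  have hQR : QserK * RserK = PowerSeries.X := by
    rw [RserK, ← mul_assoc, ← mul_assoc]
    rw [show QserK * PowerSeries.X * kK = QserK * (PowerSeries.X * kK) by ring, key,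
      mul_assoc, denom_mul_inv, mul_one]
  refine ⟨hQR, ?_⟩
  have hQ0 : constantCoeff QserK ≠ 0 := by
    have : constantCoeff QserK = 1 := by
      have hinv : constantCoeff hK⁻¹ = (1 + yK)⁻¹ := by
        rw [PowerSeries.constantCoeff_inv, constCoeff_hK]
      simp [QserK, hinv, constCoeff_hK, mul_inv_cancel₀ one_add_yK_ne]
    rw [this]; exact one_ne_zero
  have hq := PowerSeries.inv_mul_cancel QserK hQ0
  calc RserK = (QserK⁻¹ * QserK) * RserK := by rw [hq, one_mul]
    _ = QserK⁻¹ * (QserK * RserK) := by ring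
    _ = PowerSeries.X * QserK⁻¹ := by rw [hQR]; ring

end
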